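/- (Population version of Theorem 1, correctly specified propensity scores.) Let Δμ̂_N, Δμ̂_C : ℝ^q → ℝ be arbitrary bounded measurable functions (possibly misspecified outcome regression models), and let e_T, e_N, e_C be the true propensity scores. Under consistency of the potential outcomes and Assumptions (A5) and (A6), the doubly-robust functional E[ (e_T(X)/p_T)·(1{G=N}/e_N(X))·(ΔY − Δμ̂_N(X)) + (1{G=T}/p_T)·Δμ̂_N(X) ] − E[ (e_T(X)/p_T)·(1{G=C}/e_C(X))·(ΔY − Δμ̂_C(X)) + (1{G=T}/p_T)·Δμ̂_C(X) ] equals δ := E[(Y₁^{(1,1)} − Y₁^{(1,0)})·1{G=T}]/p_T. -/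

import Mathlib

open MeasureTheory ProbabilityTheory Filter Topology

/-- Group label: `T` = treated (`g(A)=(1,0)`), `N` = neighboring control (`g(A)=(0,1)`),
`C` = non-neighboring control (`g(A)=(0,0)`). -/
inductive GLabel : Type
  | T | N | C
  deriving DecidableEq

instance : MeasurableSpace GLabel := ⊤

/-- The σ-algebra `𝔛` generated by the covariates `X`. -/
def sigmaX {Ω : Type} {q : ℕ} (X : Ω → (Fin q → ℝ)) : MeasurableSpace Ω :=
  MeasurableSpace.comap X inferInstance

/-- The indicator `1{G = g}` as a real-valued function. -/
def indG {Ω : Type} (G : Ω → GLabel) (g : GLabel) (ω : Ω) : ℝ :=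
  if G ω = g then 1 else 0

/-- `f` is a version of the conditional expectation `E[Z ∣ G = g, X]`:
it is measurable and `E[Z·1{G=g} ∣ 𝔛] = f(X)·e_g(X)` `P`-a.s. -/
def IsCondVersion {Ω : Type} [MeasurableSpace Ω] (P : Measure Ω) {q : ℕ}
    (X : Ω → (Fin q → ℝ)) (G : Ω → GLabel) (e : GLabel → (Fin q → ℝ) → ℝ)
    (g : GLabel) (Z : Ω → ℝ) (f : (Fin q → ℝ) → ℝ) : Prop :=
  Measurable f ∧
    P[(fun ω => Z ω * indG G g ω) | sigmaX X] =ᵐ[P] (fun ω => f (X ω) * e g (X ω))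

/-!
Weighting the `g`-group by `e_T(X) / e_g(X)` and conditioning on `X` turns each doubly-robust
term into `E[e_T(X) · E[ΔY ∣ G = g, X]] / p_T`, whatever the outcome model `μ̂`: because
`E[1{G=g} ∣ X] = e_g(X)`, both `μ̂`-terms become `E[e_T(X) μ̂(X)] / p_T` and cancel.
On `N` the outcome change splits as `(Y₁^{(0,1)} - Y₁^{(0,0)}) + (Y₁^{(0,0)} - Y₀^{(0,0)})`.
(A6) cancels the second part against the `C`-term, and (A5) turns the first into
`-E[e_T(X) · E[Y₁^{(1,0)} - Y₁^{(1,1)} ∣ G = T, X]] / p_T = δ`.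
-/

section PullOut

variable {Ω : Type*} {m m₀ : MeasurableSpace Ω} {μ : Measure Ω}

theorem integral_mul_eq_of_condExp_ae_eq (hm : m ≤ m₀) [SigmaFinite (μ.trim hm)]
    {ψ W F : Ω → ℝ} (hψ : StronglyMeasurable[m] ψ) {C : ℝ} (hψC : ∀ ω, |ψ ω| ≤ C)
    (hW : Integrable W μ) (hF : μ[W | m] =ᵐ[μ] F) :
    ∫ ω, ψ ω * W ω ∂μ = ∫ ω, ψ ω * F ω ∂μ := by
  have hψW : Integrable (ψ * W) μ :=
    hW.bdd_mul (hψ.mono hm).aestronglyMeasurable (ae_of_all _ hψC)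
  calc ∫ ω, ψ ω * W ω ∂μ = ∫ ω, (μ[ψ * W | m]) ω ∂μ := (integral_condExp hm).symm
    _ = ∫ ω, ψ ω * F ω ∂μ := integral_congr_ae <|
        (condExp_mul_of_stronglyMeasurable_left hψ hψW hW).trans <|
          hF.mono fun ω hω => by simp [hω]

end PullOut

section Covariates

variable {Ω : Type} [MeasurableSpace Ω] {P : Measure Ω} {q : ℕ} {X : Ω → (Fin q → ℝ)}

theorem integrable_comp_mul (hX : Measurable X) {φ : (Fin q → ℝ) → ℝ} (hφ : Measurable φ)
    {C : ℝ} (hφC : ∀ x, |φ x| ≤ C) {W : Ω → ℝ} (hW : Integrable W P) :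
    Integrable (fun ω => φ (X ω) * W ω) P :=
  hW.bdd_mul (hφ.comp hX).aestronglyMeasurable (ae_of_all _ fun ω => hφC (X ω))

theorem integral_comp_mul_eq_of_condExp_ae_eq [IsFiniteMeasure P] (hX : Measurable X)
    {φ : (Fin q → ℝ) → ℝ} (hφ : Measurable φ) {C : ℝ} (hφC : ∀ x, |φ x| ≤ C)
    {W F : Ω → ℝ} (hW : Integrable W P) (hF : P[W | sigmaX X] =ᵐ[P] F) :
    ∫ ω, φ (X ω) * W ω ∂P = ∫ ω, φ (X ω) * F ω ∂P :=
  integral_mul_eq_of_condExp_ae_eq hX.comap_le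
    (hφ.comp (Measurable.of_comap_le le_rfl)).stronglyMeasurable (fun ω => hφC (X ω)) hW hF

end Covariates

theorem abs_indG_le_one {Ω : Type} (G : Ω → GLabel) (g : GLabel) (ω : Ω) :
    |indG G g ω| ≤ 1 := by
  unfold indG; split <;> simp

section Groups

variable {Ω : Type} [MeasurableSpace Ω] {P : Measure Ω} {q : ℕ} {X : Ω → (Fin q → ℝ)}
  {G : Ω → GLabel} {e : GLabel → (Fin q → ℝ) → ℝ}

theorem measurable_indG (hG : Measurable G) (g : GLabel) : Measurable (indG G g) :=
  Measurable.ite (hG (MeasurableSpace.measurableSet_top (s := {g}))) measurable_const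
    measurable_const

theorem integrable_mul_indG (hG : Measurable G) {Z : Ω → ℝ} (hZ : Integrable Z P)
    (g : GLabel) :
    Integrable (fun ω => Z ω * indG G g ω) P := by
  simpa only [mul_comm] using
    hZ.bdd_mul (measurable_indG hG g).aestronglyMeasurable (ae_of_all _ (abs_indG_le_one G g))

theorem abs_div_le_inv_of_le_one {ε : ℝ} (he1 : ∀ g x, e g x ≤ 1) (hε : 0 < ε)
    (hpos : ∀ g x, ε ≤ e g x) (g g' : GLabel) (x : Fin q → ℝ) :
    |e g x / e g' x| ≤ ε⁻¹ := by
  have hg : 0 ≤ e g x := hε.le.trans (hpos g x)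
  rw [abs_of_nonneg (div_nonneg hg (hε.le.trans (hpos g' x))), ← one_div]
  exact div_le_div₀ zero_le_one (he1 g x) hε (hpos g' x)

namespace IsCondVersion

variable {g : GLabel} {Z : Ω → ℝ} {f : (Fin q → ℝ) → ℝ}

theorem integral_mul_indG [IsFiniteMeasure P] (hX : Measurable X)
    (hf : IsCondVersion P X G e g Z f) :
    ∫ ω, Z ω * indG G g ω ∂P = ∫ ω, f (X ω) * e g (X ω) ∂P := by
  rw [← integral_condExp hX.comap_le]
  exact integral_congr_ae hf.2

theorem add (hG : Measurable G) {Z' : Ω → ℝ} {f' : (Fin q → ℝ) → ℝ}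
    (hZ : Integrable Z P) (hZ' : Integrable Z' P) (hf : IsCondVersion P X G e g Z f)
    (hf' : IsCondVersion P X G e g Z' f') :
    IsCondVersion P X G e g (fun ω => Z ω + Z' ω) (fun x => f x + f' x) := by
  refine ⟨hf.1.add hf'.1, ?_⟩
  have hsum : (fun ω => (Z ω + Z' ω) * indG G g ω)
      = (fun ω => Z ω * indG G g ω) + fun ω => Z' ω * indG G g ω := by
    ext ω; simp only [Pi.add_apply]; ring
  rw [hsum]
  filter_upwards [condExp_add (integrable_mul_indG hG hZ g) (integrable_mul_indG hG hZ' g)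
    (sigmaX X), hf.2, hf'.2] with ω hω h h'
  rw [hω, Pi.add_apply, h, h']
  ring

theorem integrable_propensity_mul {ε : ℝ} (hX : Measurable X) (he : ∀ g, Measurable (e g))
    (he1 : ∀ g x, e g x ≤ 1) (hε : 0 < ε) (hpos : ∀ g x, ε ≤ e g x)
    (hf : IsCondVersion P X G e g Z f) (g' : GLabel) :
    Integrable (fun ω => e g' (X ω) * f (X ω)) P := by
  refine (integrable_comp_mul hX ((he g').div (he g)) (abs_div_le_inv_of_le_one he1 hε hpos g' g)
    (integrable_condExp.congr hf.2)).congr (ae_of_all _ fun ω => ?_)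
  have : e g (X ω) ≠ 0 := (hε.trans_le (hpos g (X ω))).ne'
  simp only [Pi.div_apply]
  field_simp

end IsCondVersion

theorem integral_doublyRobust_eq [IsFiniteMeasure P] {ε : ℝ} (hX : Measurable X)
    (hG : Measurable G) (he : ∀ g, Measurable (e g)) (he1 : ∀ g x, e g x ≤ 1)
    (hprop : ∀ g : GLabel,
      P[(fun ω => indG G g ω) | sigmaX X] =ᵐ[P] (fun ω => e g (X ω)))
    (hε : 0 < ε) (hpos : ∀ g x, ε ≤ e g x) (p : ℝ) {g : GLabel} {D Z : Ω → ℝ}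
    (hZ : Integrable Z P) {h : (Fin q → ℝ) → ℝ} (hh : IsCondVersion P X G e g Z h)
    (hDZ : ∀ᵐ ω ∂P, G ω = g → D ω = Z ω) {μhat : (Fin q → ℝ) → ℝ}
    (hμhat : Measurable μhat) {M : ℝ} (hM : ∀ x, |μhat x| ≤ M) :
    ∫ ω, (e GLabel.T (X ω) / p) * (indG G g ω / e g (X ω)) * (D ω - μhat (X ω))
        + (indG G GLabel.T ω / p) * μhat (X ω) ∂P
      = (∫ ω, e GLabel.T (X ω) * h (X ω) ∂P) / p := by
  set w : (Fin q → ℝ) → ℝ := fun x => e GLabel.T x / e g x with hw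
  have hw_meas : Measurable w := (he _).div (he g)
  have hwμ_meas : Measurable fun x => w x * μhat x := hw_meas.mul hμhat
  have hw_bd : ∀ x, |w x| ≤ ε⁻¹ := abs_div_le_inv_of_le_one he1 hε hpos _ g
  have hwμ_bd : ∀ x, |w x * μhat x| ≤ ε⁻¹ * M := fun x => by
    rw [abs_mul]; exact mul_le_mul (hw_bd x) (hM x) (abs_nonneg _) (by positivity)
  have heg : ∀ x, e g x ≠ 0 := fun x => (hε.trans_le (hpos g x)).ne'
  have hsplit : (fun ω => (e GLabel.T (X ω) / p) * (indG G g ω / e g (X ω)) *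
        (D ω - μhat (X ω)) + (indG G GLabel.T ω / p) * μhat (X ω)) =ᵐ[P]
      fun ω => p⁻¹ * (w (X ω) * (Z ω * indG G g ω) - (w (X ω) * μhat (X ω)) * indG G g ω
        + μhat (X ω) * indG G GLabel.T ω) := by
    filter_upwards [hDZ] with ω hω
    by_cases hg : G ω = g
    · simp only [hw, indG, if_pos hg, hω hg]; ring
    · simp only [indG, if_neg hg]; ring
  have hIndG : ∀ g', Integrable (indG G g') P := fun g' => by
    simpa using integrable_mul_indG hG (integrable_const (1 : ℝ)) g'
  have hZg := integrable_mul_indG hG hZ g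
  rw [integral_congr_ae hsplit, integral_const_mul,
    integral_add ((integrable_comp_mul hX hw_meas hw_bd hZg).sub'
      (integrable_comp_mul hX hwμ_meas hwμ_bd (hIndG g)))
      (integrable_comp_mul hX hμhat hM (hIndG _)),
    integral_sub (integrable_comp_mul hX hw_meas hw_bd hZg)
      (integrable_comp_mul hX hwμ_meas hwμ_bd (hIndG g)),
    integral_comp_mul_eq_of_condExp_ae_eq hX hw_meas hw_bd hZg hh.2,
    integral_comp_mul_eq_of_condExp_ae_eq hX hwμ_meas hwμ_bd (hIndG g) (hprop g),
    integral_comp_mul_eq_of_condExp_ae_eq hX hμhat hM (hIndG _) (hprop _)]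
  have hcancel : ∀ ω, w (X ω) * μhat (X ω) * e g (X ω) = μhat (X ω) * e GLabel.T (X ω) :=
    fun ω => by have := heg (X ω); simp only [hw]; field_simp
  have hmain : ∀ ω, w (X ω) * (h (X ω) * e g (X ω)) = e GLabel.T (X ω) * h (X ω) :=
    fun ω => by have := heg (X ω); simp only [hw]; field_simp
  simp only [hcancel, hmain]
  ring

end Groups

theorem stmt_8_general
    {Ω : Type} [MeasurableSpace Ω] (P : Measure Ω) [IsProbabilityMeasure P]
    {q : ℕ} (X : Ω → (Fin q → ℝ)) (hX : Measurable X)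
    (G : Ω → GLabel) (hG : Measurable G)
    (Y0 Y1 : Ω → ℝ)
    (e : GLabel → (Fin q → ℝ) → ℝ) (he : ∀ g, Measurable (e g))
    (he1 : ∀ g x, e g x ≤ 1)
    (hprop : ∀ g : GLabel,
      P[(fun ω => indG G g ω) | sigmaX X] =ᵐ[P] (fun ω => e g (X ω)))
    (ε : ℝ) (hε : 0 < ε) (hpos : ∀ g x, ε ≤ e g x)
    (Y110 Y111 Y101 Y100 Y000 : Ω → ℝ)
    (hI01 : Integrable Y101 P) (hI00 : Integrable Y100 P) (hI000 : Integrable Y000 P)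
    (hconsN : ∀ᵐ ω ∂P, G ω = GLabel.N → Y1 ω = Y101 ω)
    (hconsC : ∀ᵐ ω ∂P, G ω = GLabel.C → Y1 ω = Y100 ω)
    (hcons0 : Y0 =ᵐ[P] Y000)
    (fT fN : (Fin q → ℝ) → ℝ)
    (hfT : IsCondVersion P X G e GLabel.T (fun ω => Y110 ω - Y111 ω) fT)
    (hfN : IsCondVersion P X G e GLabel.N (fun ω => Y101 ω - Y100 ω) fN)
    (hA5 : ∀ᵐ ω ∂P, fT (X ω) + fN (X ω) = 0)
    (gN gC : (Fin q → ℝ) → ℝ)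
    (hgN : IsCondVersion P X G e GLabel.N (fun ω => Y100 ω - Y000 ω) gN)
    (hgC : IsCondVersion P X G e GLabel.C (fun ω => Y100 ω - Y000 ω) gC)
    (hA6 : ∀ᵐ ω ∂P, gN (X ω) = gC (X ω))
    (μhatN μhatC : (Fin q → ℝ) → ℝ)
    (hμhatN : Measurable μhatN) (hμhatC : Measurable μhatC)
    (MN : ℝ) (hMN : ∀ x, |μhatN x| ≤ MN) (MC : ℝ) (hMC : ∀ x, |μhatC x| ≤ MC)
    :
    (∫ ω, (e GLabel.T (X ω) / (P {ω | G ω = GLabel.T}).toReal) * (indG G GLabel.N ω / e GLabel.N (X ω)) *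
          ((Y1 ω - Y0 ω) - μhatN (X ω))
        + (indG G GLabel.T ω / (P {ω | G ω = GLabel.T}).toReal) * μhatN (X ω) ∂P)
      - (∫ ω, (e GLabel.T (X ω) / (P {ω | G ω = GLabel.T}).toReal) * (indG G GLabel.C ω / e GLabel.C (X ω)) *
          ((Y1 ω - Y0 ω) - μhatC (X ω))
        + (indG G GLabel.T ω / (P {ω | G ω = GLabel.T}).toReal) * μhatC (X ω) ∂P)
      = (∫ ω, (Y111 ω - Y110 ω) * indG G GLabel.T ω ∂P) / (P {ω | G ω = GLabel.T}).toReal := by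
  have hZ1 := hI01.sub' hI00
  have hZ0 := hI00.sub' hI000
  have hZN : Integrable (fun ω => (Y101 ω - Y100 ω) + (Y100 ω - Y000 ω)) P := hZ1.add hZ0
  have hvN := hfN.add hG hZ1 hZ0 hgN
  have hΔN : ∀ᵐ ω ∂P, G ω = GLabel.N →
      Y1 ω - Y0 ω = (Y101 ω - Y100 ω) + (Y100 ω - Y000 ω) := by
    filter_upwards [hconsN, hcons0] with ω h1 h0 hg
    rw [h1 hg, h0]; ring
  have hΔC : ∀ᵐ ω ∂P, G ω = GLabel.C → Y1 ω - Y0 ω = Y100 ω - Y000 ω := by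
    filter_upwards [hconsC, hcons0] with ω h1 h0 hg
    rw [h1 hg, h0]
  rw [integral_doublyRobust_eq hX hG he he1 hprop hε hpos _ hZN hvN hΔN hμhatN hMN,
    integral_doublyRobust_eq hX hG he he1 hprop hε hpos _ hZ0 hgC hΔC hμhatC hMC, ← sub_div,
    ← integral_sub (hvN.integrable_propensity_mul hX he he1 hε hpos _)
      (hgC.integrable_propensity_mul hX he he1 hε hpos _)]
  have hδ : ∫ ω, (Y111 ω - Y110 ω) * indG G GLabel.T ω ∂P
      = -∫ ω, fT (X ω) * e GLabel.T (X ω) ∂P := by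
    rw [← hfT.integral_mul_indG hX, ← integral_neg]
    congr 1 with ω
    ring
  rw [hδ, ← integral_neg]
  congr 1
  refine integral_congr_ae ?_
  filter_upwards [hA5, hA6] with ω h5 h6
  rw [← h6]
  linear_combination e GLabel.T (X ω) * h5

theorem stmt_8
    {Ω : Type} [MeasurableSpace Ω] (P : Measure Ω) [IsProbabilityMeasure P]
    {q : ℕ} (X : Ω → (Fin q → ℝ)) (hX : Measurable X)
    (G : Ω → GLabel) (hG : Measurable G)
    (Y0 Y1 : Ω → ℝ) (hY0 : Integrable Y0 P) (hY1 : Integrable Y1 P)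
    (e : GLabel → (Fin q → ℝ) → ℝ) (he : ∀ g, Measurable (e g))
    (he1 : ∀ g x, e g x ≤ 1)
    (hprop : ∀ g : GLabel,
      P[(fun ω => indG G g ω) | sigmaX X] =ᵐ[P] (fun ω => e g (X ω)))
    (ε : ℝ) (hε : 0 < ε) (hpos : ∀ g x, ε ≤ e g x)
    (hpT : 0 < (P {ω | G ω = GLabel.T}).toReal)
    (Y110 Y111 Y101 Y100 Y000 : Ω → ℝ)
    (hI10 : Integrable Y110 P) (hI11 : Integrable Y111 P)
    (hI01 : Integrable Y101 P) (hI00 : Integrable Y100 P) (hI000 : Integrable Y000 P)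
    (hconsT : ∀ᵐ ω ∂P, G ω = GLabel.T → Y1 ω = Y110 ω)
    (hconsN : ∀ᵐ ω ∂P, G ω = GLabel.N → Y1 ω = Y101 ω)
    (hconsC : ∀ᵐ ω ∂P, G ω = GLabel.C → Y1 ω = Y100 ω)
    (hcons0 : Y0 =ᵐ[P] Y000)
    (fT fN : (Fin q → ℝ) → ℝ)
    (hfT : IsCondVersion P X G e GLabel.T (fun ω => Y110 ω - Y111 ω) fT)
    (hfN : IsCondVersion P X G e GLabel.N (fun ω => Y101 ω - Y100 ω) fN)
    (hA5 : ∀ᵐ ω ∂P, fT (X ω) + fN (X ω) = 0)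
    (gN gC : (Fin q → ℝ) → ℝ)
    (hgN : IsCondVersion P X G e GLabel.N (fun ω => Y100 ω - Y000 ω) gN)
    (hgC : IsCondVersion P X G e GLabel.C (fun ω => Y100 ω - Y000 ω) gC)
    (hA6 : ∀ᵐ ω ∂P, gN (X ω) = gC (X ω))
    (μhatN μhatC : (Fin q → ℝ) → ℝ)
    (hμhatN : Measurable μhatN) (hμhatC : Measurable μhatC)
    (MN : ℝ) (hMN : ∀ x, |μhatN x| ≤ MN) (MC : ℝ) (hMC : ∀ x, |μhatC x| ≤ MC)
    :
    (∫ ω, (e GLabel.T (X ω) / (P {ω | G ω = GLabel.T}).toReal) * (indG G GLabel.N ω / e GLabel.N (X ω)) *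
          ((Y1 ω - Y0 ω) - μhatN (X ω))
        + (indG G GLabel.T ω / (P {ω | G ω = GLabel.T}).toReal) * μhatN (X ω) ∂P)
      - (∫ ω, (e GLabel.T (X ω) / (P {ω | G ω = GLabel.T}).toReal) * (indG G GLabel.C ω / e GLabel.C (X ω)) *
          ((Y1 ω - Y0 ω) - μhatC (X ω))
        + (indG G GLabel.T ω / (P {ω | G ω = GLabel.T}).toReal) * μhatC (X ω) ∂P)
      = (∫ ω, (Y111 ω - Y110 ω) * indG G GLabel.T ω ∂P) / (P {ω | G ω = GLabel.T}).toReal :=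
  stmt_8_general P X hX G hG Y0 Y1 e he he1 hprop ε hε hpos Y110 Y111 Y101 Y100 Y000 hI01 hI00 hI000
    hconsN hconsC hcons0 fT fN hfT hfN hA5 gN gC hgN hgC hA6 μhatN μhatC hμhatN hμhatC MN hMN MC hMC
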